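/- Let s be a positive integer, δ ≥ 0, |ψ⟩ a unit vector in a finite-dimensional Hilbert space H, and B ∈ L(H) a normal operator such that ‖(B^s − Id)|ψ⟩‖² ≤ δ. Then there exists a unitary U with the same eigenvectors as B such that U^s = Id and ‖(B − U)|ψ⟩‖² ≤ 4δ. -/

import Mathlib

/-!
Round every eigenvalue `z` of `B` to the `s`-th root of unity `ω z` nearest in angle and put
`U = cfc ω B`. Then `U` is unitary with `U ^ s = 1`, and it is a polynomial in `B` (interpolate `ω`
on the finite spectrum), so it keeps the eigenvectors of `B`. The scalar inequality
`‖z - ω z‖ ≤ 2 ‖z ^ s - 1‖` lets one write `z - ω z = g z * (z ^ s - 1)` with `‖g‖ ≤ 2` on the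
spectrum, hence `B - U = g(B) (B ^ s - 1)` with `‖g(B)‖ ≤ 2`.

For the scalar inequality write `z = ω z * r e^{iφ}` with `|φ| ≤ π / s`. Both sides are then explicit
in `r` and `φ`, and they compare by Jordan's inequality `2x/π ≤ sin x` on `[0, π/2]`, applied at `sφ/2`.
-/

open Matrix Real
open scoped Matrix.Norms.L2Operator

namespace Real

lemma one_sub_cos_eq_two_mul_sin_sq (x : ℝ) : 1 - cos x = 2 * sin (x / 2) ^ 2 := by
  rw [sin_sq_eq_half_sub, mul_div_cancel₀ x two_ne_zero]
  ring

lemma four_div_sq_pi_mul_sq_mul_one_sub_cos_le {t φ : ℝ} (h₀ : 0 ≤ t * φ) (hπ : t * φ ≤ π) :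
    4 / π ^ 2 * t ^ 2 * (1 - cos φ) ≤ 1 - cos (t * φ) := by
  have hsin : sin (φ / 2) ^ 2 ≤ (φ / 2) ^ 2 := sq_le_sq.2 abs_sin_le_abs
  have hjordan : 2 / π * (t * φ / 2) ≤ sin (t * φ / 2) := mul_le_sin (by positivity) (by linarith)
  have hjordan_sq : (2 / π * (t * φ / 2)) ^ 2 ≤ sin (t * φ / 2) ^ 2 :=
    pow_le_pow_left₀ (by positivity) hjordan 2
  rw [one_sub_cos_eq_two_mul_sin_sq, one_sub_cos_eq_two_mul_sin_sq]
  calc 4 / π ^ 2 * t ^ 2 * (2 * sin (φ / 2) ^ 2)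
      ≤ 4 / π ^ 2 * t ^ 2 * (2 * (φ / 2) ^ 2) := by gcongr
    _ = 2 * (2 / π * (t * φ / 2)) ^ 2 := by ring
    _ ≤ 2 * sin (t * φ / 2) ^ 2 := by gcongr

lemma sub_one_sq_le_pow_sub_one_sq {r : ℝ} (hr : 0 ≤ r) {s : ℕ} (hs : s ≠ 0) :
    (r - 1) ^ 2 ≤ (r ^ s - 1) ^ 2 := by
  rcases le_total r 1 with h | h
  · have := pow_le_of_le_one hr h hs
    have := pow_le_one₀ (n := s) hr h
    nlinarith
  · have := le_self_pow₀ h hs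
    nlinarith

lemma two_mul_mul_one_sub_cos_le {s : ℕ} (hs : s ≠ 0) {r φ : ℝ} (hr : 0 ≤ r) (hφ : 0 ≤ φ)
    (hsφ : s * φ ≤ π) :
    2 * r * (1 - cos φ) ≤ 3 * (r ^ s - 1) ^ 2 + 8 * r ^ s * (1 - cos (s * φ)) := by
  have hc : 0 ≤ 1 - cos φ := sub_nonneg.2 (cos_le_one φ)
  have hC : 0 ≤ 1 - cos (s * φ) := sub_nonneg.2 (cos_le_one _)
  have hrs : 0 ≤ r ^ s := pow_nonneg hr s
  have hπ : 0 < π := pi_pos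
  -- Either Jordan's inequality lets the `r ^ s` term absorb the left side, or `r ^ s ≤ 5 / 32`
  -- and `3 (r ^ s - 1) ^ 2 ≥ 2 ≥ 2 r (1 - cos φ)`, using `φ ≤ π / 2`.
  by_cases hbig : π ^ 2 * r ≤ 16 * s ^ 2 * r ^ s
  · have hjordan : 4 * s ^ 2 * (1 - cos φ) ≤ π ^ 2 * (1 - cos (s * φ)) := by
      have := four_div_sq_pi_mul_sq_mul_one_sub_cos_le (by positivity) hsφ
      rw [mul_assoc, div_mul_eq_mul_div, div_le_iff₀' (by positivity)] at this
      linarith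
    have : π ^ 2 * (2 * r * (1 - cos φ)) ≤ π ^ 2 * (8 * r ^ s * (1 - cos (s * φ))) :=
      calc π ^ 2 * (2 * r * (1 - cos φ)) ≤ 16 * s ^ 2 * r ^ s * (2 * (1 - cos φ)) := by
            nlinarith
        _ = 8 * r ^ s * (4 * s ^ 2 * (1 - cos φ)) := by ring
        _ ≤ 8 * r ^ s * (π ^ 2 * (1 - cos (s * φ))) := by gcongr
        _ = π ^ 2 * (8 * r ^ s * (1 - cos (s * φ))) := by ring
    nlinarith [le_of_mul_le_mul_left this (by positivity)]
  · rw [not_le] at hbig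
    have hπ2 : π ^ 2 < 10 := by nlinarith [pi_lt_d2]
    have hr1 : r ≤ 1 := by
      by_contra! hr1
      have : r ≤ r ^ s := le_self_pow₀ hr1.le hs
      have : (1 : ℝ) ≤ s ^ 2 := by norm_cast; exact Nat.one_le_pow _ _ (Nat.pos_of_ne_zero hs)
      nlinarith
    have hs2 : 2 ≤ s := by
      by_contra! hs1
      obtain rfl : s = 1 := by omega
      norm_num at hbig
      nlinarith
    have hrs_small : r ^ s ≤ 5 / 32 := by
      have : (4 : ℝ) ≤ s ^ 2 := by norm_cast; nlinarith
      nlinarith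
    have hcos : 0 ≤ cos φ := by
      apply cos_nonneg_of_neg_pi_div_two_le_of_le (by linarith)
      have : (2 : ℝ) ≤ s := by exact_mod_cast hs2
      nlinarith
    nlinarith

end Real

namespace Complex

lemma norm_ofReal_mul_exp_sub_one_sq (r φ : ℝ) :
    ‖(r : ℂ) * exp (φ * I) - 1‖ ^ 2 = (r - 1) ^ 2 + 2 * r * (1 - Real.cos φ) := by
  rw [Complex.sq_norm, normSq_apply]
  simp only [sub_re, sub_im, mul_re, mul_im, ofReal_re, ofReal_im, exp_ofReal_mul_I_re,
    exp_ofReal_mul_I_im, one_re, one_im, zero_mul, sub_zero]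
  linear_combination r ^ 2 * Real.sin_sq_add_cos_sq φ

lemma norm_ofReal_mul_exp_sub_one_le {s : ℕ} (hs : s ≠ 0) {r φ : ℝ} (hr : 0 ≤ r)
    (hφ : |φ| ≤ π / s) :
    ‖(r : ℂ) * exp (φ * I) - 1‖ ≤ 2 * ‖((r : ℂ) * exp (φ * I)) ^ s - 1‖ := by
  have hpow : ((r : ℂ) * exp (φ * I)) ^ s = ((r ^ s : ℝ) : ℂ) * exp ((s * φ : ℝ) * I) := by
    rw [mul_pow, ← exp_nat_mul]
    push_cast
    ring_nf
  have hsφ : s * |φ| ≤ π := by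
    rwa [le_div_iff₀' (by positivity)] at hφ
  have hsq := two_mul_mul_one_sub_cos_le hs hr (abs_nonneg φ) hsφ
  rw [Real.cos_abs, ← Nat.abs_cast s, ← abs_mul, Real.cos_abs] at hsq
  have hsq' := sub_one_sq_le_pow_sub_one_sq hr hs
  refine (pow_le_pow_iff_left₀ (norm_nonneg _) (by positivity) two_ne_zero).1 ?_
  rw [mul_pow, hpow, norm_ofReal_mul_exp_sub_one_sq, norm_ofReal_mul_exp_sub_one_sq]
  linarith

noncomputable def nearestRootOfUnity (s : ℕ) (z : ℂ) : ℂ :=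
  exp ((2 * π * round (s * arg z / (2 * π)) / s : ℝ) * I)

lemma norm_nearestRootOfUnity (s : ℕ) (z : ℂ) : ‖nearestRootOfUnity s z‖ = 1 :=
  norm_exp_ofReal_mul_I _

lemma nearestRootOfUnity_pow {s : ℕ} (hs : s ≠ 0) (z : ℂ) : nearestRootOfUnity s z ^ s = 1 := by
  rw [nearestRootOfUnity, ← exp_nat_mul, ← exp_int_mul_two_pi_mul_I (round (s * arg z / (2 * π)))]
  congr 1
  push_cast
  field_simp

lemma norm_sub_nearestRootOfUnity_le {s : ℕ} (hs : s ≠ 0) (z : ℂ) :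
    ‖z - nearestRootOfUnity s z‖ ≤ 2 * ‖z ^ s - 1‖ := by
  set k : ℤ := round (s * arg z / (2 * π))
  set α : ℝ := 2 * π * k / s
  set w : ℂ := (‖z‖ : ℂ) * exp ((arg z - α : ℝ) * I)
  set ω := nearestRootOfUnity s z
  have hφ : |arg z - α| ≤ π / s := by
    have hk : |s * arg z / (2 * π) - k| ≤ 1 / 2 := abs_sub_round _
    have : arg z - α = 2 * π / s * (s * arg z / (2 * π) - k) := by
      simp only [α]
      field_simp
    rw [this, abs_mul, abs_of_pos (by positivity)]
    calc 2 * π / s * |s * arg z / (2 * π) - k| ≤ 2 * π / s * (1 / 2) := by gcongr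
      _ = π / s := by ring
  have hz : z = ω * w := by
    conv_lhs => rw [← norm_mul_exp_arg_mul_I z]
    rw [show ω = exp (α * I) from rfl, mul_left_comm, ← exp_add]
    push_cast
    ring_nf
  have hzs : z ^ s = w ^ s := by
    rw [hz, mul_pow, nearestRootOfUnity_pow hs, one_mul]
  calc ‖z - ω‖ = ‖w - 1‖ := by
        rw [hz, ← mul_sub_one, norm_mul, norm_nearestRootOfUnity, one_mul]
    _ ≤ 2 * ‖w ^ s - 1‖ := norm_ofReal_mul_exp_sub_one_le hs (norm_nonneg z) hφ
    _ = 2 * ‖z ^ s - 1‖ := by rw [hzs]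

end Complex

namespace Matrix

variable {n : Type*} [Fintype n] [DecidableEq n]

lemma cfc_mulVec_of_mulVec_eq_smul (A : Matrix n n ℂ) [IsStarNormal A] (f : ℂ → ℂ) {μ : ℂ}
    {v : n → ℂ} (hv : A *ᵥ v = μ • v) : cfc f A *ᵥ v = f μ • v := by
  rcases eq_or_ne v 0 with rfl | hv₀
  · simp
  have hv' : toLinAlgEquiv' A v = μ • v := by rwa [toLinAlgEquiv'_apply]
  have hμ : μ ∈ spectrum ℂ A := by
    rw [← spectrum_toLin']
    exact Module.End.hasEigenvalue_iff_mem_spectrum.1 <|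
      Module.End.hasEigenvalue_of_hasEigenvector ⟨Module.End.mem_eigenspace_iff.2 hv', hv₀⟩
  set p := Lagrange.interpolate A.finite_spectrum.toFinset id f
  have hp : ∀ z ∈ spectrum ℂ A, p.eval z = f z := fun z hz =>
    Lagrange.eval_interpolate_at_node f (Set.injOn_id _) (by simpa using hz)
  have hcfc : cfc f A = Polynomial.aeval A p := by
    rw [← cfc_polynomial p A]
    exact cfc_congr fun z hz => (hp z hz).symm
  have := Module.End.aeval_apply_of_mem_apply_eq_smul (p := p) hv'
  rwa [Polynomial.aeval_algHom_apply, toLinAlgEquiv'_apply, ← hcfc, hp μ hμ] at this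

lemma norm_cfc_mulVec_le (A : Matrix n n ℂ) [IsStarNormal A] {f g : ℂ → ℂ} {C : ℝ} (hC : 0 ≤ C)
    (hfg : ∀ z ∈ spectrum ℂ A, ‖f z‖ ≤ C * ‖g z‖) (x : n → ℂ) :
    ‖(EuclideanSpace.equiv n ℂ).symm (cfc f A *ᵥ x)‖
      ≤ C * ‖(EuclideanSpace.equiv n ℂ).symm (cfc g A *ᵥ x)‖ := by
  have hcont (h : ℂ → ℂ) : ContinuousOn h (spectrum ℂ A) := A.finite_spectrum.continuousOn h
  have hquot : ‖cfc (fun z => f z / g z) A‖ ≤ C := norm_cfc_le hC fun z hz => by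
    rw [norm_div]
    exact div_le_of_le_mul₀ (norm_nonneg _) hC (hfg z hz)
  -- where `g z = 0`, the junk value `f z / 0 = 0` is harmless because `f z = 0` there too
  have hfac : cfc f A = cfc (fun z => f z / g z) A * cfc g A := by
    rw [← cfc_mul _ _ A (hcont _) (hcont _)]
    refine cfc_congr fun z hz => ?_
    rcases eq_or_ne (g z) 0 with hg | hg
    · simpa [hg] using hfg z hz
    · exact (div_mul_cancel₀ _ hg).symm
  rw [hfac, ← mulVec_mulVec]
  calc _ ≤ ‖cfc (fun z => f z / g z) A‖ * ‖(EuclideanSpace.equiv n ℂ).symm (cfc g A *ᵥ x)‖ :=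
        l2_opNorm_mulVec _ _
    _ ≤ C * ‖(EuclideanSpace.equiv n ℂ).symm (cfc g A *ᵥ x)‖ := by gcongr

end Matrix

theorem round_to_roots_general
    (s : ℕ) (hs : 0 < s) (δ : ℝ)
    (n : Type) [Fintype n] [DecidableEq n]
    (B : Matrix n n ℂ) (hB : B * Bᴴ = Bᴴ * B)
    (ψ : n → ℂ)
    (h : ∑ i, Complex.normSq ((Matrix.mulVec (B ^ s - 1) ψ) i) ≤ δ) :
    ∃ U : Matrix n n ℂ, U ∈ Matrix.unitaryGroup n ℂ ∧ U ^ s = 1 ∧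
      (∀ (μ : ℂ) (v : n → ℂ), Matrix.mulVec B v = μ • v →
        ∃ ν : ℂ, Matrix.mulVec U v = ν • v) ∧
      ∑ i, Complex.normSq ((Matrix.mulVec (B - U) ψ) i) ≤ 4 * δ := by
  have : IsStarNormal B := ⟨hB.symm⟩
  have hcont (f : ℂ → ℂ) : ContinuousOn f (spectrum ℂ B) := B.finite_spectrum.continuousOn f
  have hnormSq (v : n → ℂ) :
      ∑ i, Complex.normSq (v i) = ‖(EuclideanSpace.equiv n ℂ).symm v‖ ^ 2 := by
    simp [EuclideanSpace.norm_sq_eq, Complex.normSq_eq_norm_sq]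
  set ω := Complex.nearestRootOfUnity s
  refine ⟨cfc ω B, ?_, ?_, fun μ v hv => ⟨ω μ, B.cfc_mulVec_of_mulVec_eq_smul ω hv⟩, ?_⟩
  · refine (cfc_unitary_iff ω B (hf := hcont ω)).2 fun z _ => ?_
    rw [Complex.star_def, Complex.conj_mul', Complex.norm_nearestRootOfUnity]
    norm_num
  · rw [← cfc_pow _ s B (hcont _), ← cfc_const_one ℂ B]
    exact cfc_congr fun z _ => Complex.nearestRootOfUnity_pow hs.ne' z
  · have hsub : B - cfc ω B = cfc (fun z => z - ω z) B := by
      rw [cfc_sub _ _ B (hcont _) (hcont _), cfc_id' ℂ B]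
    have hpow : B ^ s - 1 = cfc (fun z : ℂ => z ^ s - 1) B := by
      rw [cfc_sub _ _ B (hcont _) (hcont _), cfc_pow_id B s, cfc_const_one ℂ B]
    have key := B.norm_cfc_mulVec_le zero_le_two
      (fun z _ => Complex.norm_sub_nearestRootOfUnity_le hs.ne' z) ψ
    rw [← hsub, ← hpow] at key
    rw [hnormSq] at h ⊢
    nlinarith [norm_nonneg ((EuclideanSpace.equiv n ℂ).symm ((B - cfc ω B) *ᵥ ψ))]

/-- Rounding a normal operator to a root-of-unity unitary (Claim 2.5): if
`‖(B^s - Id)ψ‖² ≤ δ` for a normal `B`, there is a unitary `U` with the same eigenvectors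
as `B`, `U^s = Id`, and `‖(B - U)ψ‖² ≤ 4δ`. -/
theorem round_to_roots
    (s : ℕ) (hs : 0 < s) (δ : ℝ) (hδ : 0 ≤ δ)
    (n : Type) [Fintype n] [DecidableEq n]
    (B : Matrix n n ℂ) (hB : B * Bᴴ = Bᴴ * B)
    (ψ : n → ℂ) (hψ : ∑ i, Complex.normSq (ψ i) = 1)
    (h : ∑ i, Complex.normSq ((Matrix.mulVec (B ^ s - 1) ψ) i) ≤ δ) :
    ∃ U : Matrix n n ℂ, U ∈ Matrix.unitaryGroup n ℂ ∧ U ^ s = 1 ∧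
      (∀ (μ : ℂ) (v : n → ℂ), Matrix.mulVec B v = μ • v →
        ∃ ν : ℂ, Matrix.mulVec U v = ν • v) ∧
      ∑ i, Complex.normSq ((Matrix.mulVec (B - U) ψ) i) ≤ 4 * δ :=
  round_to_roots_general s hs δ n B hB ψ h
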